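/- arXiv:2507.23731 — 5 statements merged into one kernel-verified Lean document; each statement's English description precedes it below -/
import Mathlib

section
/- First localization lemma: Let λ be a probability measure on a measurable space X, let (X_i)_{i ∈ I} be a finite measurable partition of X with λ(X_i) > 0 for every i ∈ I, let h : X → ℝ be a measurable function, and let σ > 0. Then ((λ ⊗ λ){(x, x') ∈ X × X : |h(x) − h(x')| ≤ σ})² ≤ Σ_{i ∈ I} (1 / λ(X_i)) · (λ ⊗ λ){(x, x̃) ∈ X_i × X_i : |h(x) − h(x̃)| ≤ 2σ}. -/
/-!
Split the σ-close pairs according to the cell `A i` containing the first point, and let `bᵢ` be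
the mass of the `i`-th piece. For fixed `y`, the set `E` of points of `A i` that are σ-close to
`y` satisfies `E ×ˢ E ⊆ A i ×ˢ A i ∩ {2σ-close}` by the triangle inequality, so `μ E ² ≤ Cᵢ`, the
mass on the right-hand side; integrating over `y` gives `bᵢ² ≤ Cᵢ`. Since `∑ μ (A i) ≤ 1`,
Cauchy–Schwarz gives `(∑ bᵢ)² ≤ ∑ bᵢ² / μ (A i) ≤ ∑ Cᵢ / μ (A i)`.
-/

open MeasureTheory
open scoped ENNReal NNReal

theorem ENNReal.sq_sum_le_sum_mul_sum_inv_mul_sq {ι : Type*} (s : Finset ι) {f g : ι → ℝ≥0∞}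
    (hf : ∀ i, f i ≠ ∞) (hg : ∀ i, g i ≠ ∞) (hfg : ∀ i, g i = 0 → f i = 0) :
    (∑ i ∈ s, f i) ^ 2 ≤ (∑ i ∈ s, g i) * ∑ i ∈ s, (g i)⁻¹ * f i ^ 2 := by
  lift f to ι → ℝ≥0 using hf
  lift g to ι → ℝ≥0 using hg
  have hfg' : ∀ i, g i = 0 → f i = 0 := fun i h0 => by simpa using hfg i (by simp [h0])
  have hterm : ∀ i, (g i : ℝ≥0∞)⁻¹ * (f i : ℝ≥0∞) ^ 2 = ((g i)⁻¹ * f i ^ 2 : ℝ≥0) := by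
    intro i
    rcases eq_or_ne (g i) 0 with h0 | h0
    · simp [h0, hfg' i h0]
    · push_cast [ENNReal.coe_inv h0]; rfl
  simp only [hterm]
  norm_cast
  refine Finset.sum_sq_le_sum_mul_sum_of_sq_le_mul s (fun _ _ => zero_le) (fun _ _ => zero_le)
    fun i _ => ?_
  rcases eq_or_ne (g i) 0 with h0 | h0
  · simp [h0, hfg' i h0]
  · rw [mul_inv_cancel_left₀ h0]

theorem MeasureTheory.Measure.prod_apply_le_iSup_measure_preimage {X Y : Type*}
    [MeasurableSpace X] [MeasurableSpace Y] (μ : Measure X) [SFinite μ] (ν : Measure Y)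
    [IsProbabilityMeasure ν] {s : Set (X × Y)} (hs : MeasurableSet s) :
    μ.prod ν s ≤ ⨆ y, μ ((fun x => (x, y)) ⁻¹' s) := by
  rw [Measure.prod_apply_symm hs]
  calc ∫⁻ y, μ ((fun x => (x, y)) ⁻¹' s) ∂ν ≤ ∫⁻ _, ⨆ y, μ ((fun x => (x, y)) ⁻¹' s) ∂ν :=
        lintegral_mono fun y => le_iSup (fun y => μ ((fun x => (x, y)) ⁻¹' s)) y
    _ = ⨆ y, μ ((fun x => (x, y)) ⁻¹' s) := by simp

theorem MeasureTheory.sq_measure_le_of_prod_subset {X : Type*} [MeasurableSpace X]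
    (μ : Measure X) [SFinite μ] {s : Set X} {t : Set (X × X)} (hst : s ×ˢ s ⊆ t) :
    μ s ^ 2 ≤ μ.prod μ t := by
  rw [sq, ← Measure.prod_prod]
  exact measure_mono hst

section closePairs

variable {X : Type*} [MeasurableSpace X]

def closePairs (h : X → ℝ) (σ : ℝ) : Set (X × X) := {p | |h p.1 - h p.2| ≤ σ}

theorem measurableSet_closePairs {h : X → ℝ} (hh : Measurable h) (σ : ℝ) :
    MeasurableSet (closePairs h σ) :=
  measurableSet_le (by fun_prop) measurable_const

theorem sq_measure_prod_closePairs_le (μ : Measure X) [IsProbabilityMeasure μ] {A : Set X}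
    (hA : MeasurableSet A) {h : X → ℝ} (hh : Measurable h) (σ : ℝ) :
    μ.prod μ ((A ×ˢ Set.univ) ∩ closePairs h σ) ^ 2 ≤
      μ.prod μ ((A ×ˢ A) ∩ closePairs h (2 * σ)) := by
  have hslice : ∀ y, μ ((fun x => (x, y)) ⁻¹' ((A ×ˢ Set.univ) ∩ closePairs h σ)) ^ 2 ≤
      μ.prod μ ((A ×ˢ A) ∩ closePairs h (2 * σ)) := by
    intro y
    refine sq_measure_le_of_prod_subset μ ?_
    rintro ⟨x, x'⟩ ⟨⟨⟨hx, -⟩, hxy⟩, ⟨hx', -⟩, hx'y⟩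
    have hxy : |h x - h y| ≤ σ := hxy
    have hx'y : |h x' - h y| ≤ σ := hx'y
    refine ⟨⟨hx, hx'⟩, ?_⟩
    calc |h x - h x'| ≤ |h x - h y| + |h y - h x'| := abs_sub_le _ _ _
      _ ≤ 2 * σ := by rw [abs_sub_comm (h y)]; linarith
  calc _ ≤ (⨆ y, μ ((fun x => (x, y)) ⁻¹' ((A ×ˢ Set.univ) ∩ closePairs h σ))) ^ 2 := by
        gcongr
        exact Measure.prod_apply_le_iSup_measure_preimage μ μ
          ((hA.prod .univ).inter (measurableSet_closePairs hh σ))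
    _ ≤ _ := by
        rw [ENNReal.iSup_pow_of_ne_zero two_ne_zero]
        exact iSup_le hslice

end closePairs

theorem stmt_2_general {X : Type*} [MeasurableSpace X] (μ : Measure X) [IsProbabilityMeasure μ]
    {I : Type*} [Fintype I] (A : I → Set X)
    (hmeas : ∀ i, MeasurableSet (A i))
    (hdisj : Pairwise (Function.onFun Disjoint A))
    (hcover : (⋃ i, A i) = Set.univ)
    (h : X → ℝ) (hh : Measurable h) (σ : ℝ) :
    ((μ.prod μ) {p : X × X | |h p.1 - h p.2| ≤ σ}) ^ 2 ≤
      ∑ i : I, (μ (A i))⁻¹ *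
        (μ.prod μ) ((A i ×ˢ A i) ∩ {p : X × X | |h p.1 - h p.2| ≤ 2 * σ}) := by
  set B : I → Set (X × X) := fun i => (A i ×ˢ Set.univ) ∩ closePairs h σ
  have hsplit : μ.prod μ (closePairs h σ) ≤ ∑ i, μ.prod μ (B i) := by
    refine (measure_mono fun p hp => ?_).trans (measure_iUnion_fintype_le _ B)
    obtain ⟨i, hi⟩ := Set.mem_iUnion.1 (hcover ▸ Set.mem_univ p.1)
    exact Set.mem_iUnion.2 ⟨i, ⟨hi, trivial⟩, hp⟩
  have hBA : ∀ i, μ.prod μ (B i) ≤ μ (A i) := fun i =>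
    (measure_mono Set.inter_subset_left).trans (by simp)
  have hmass : ∑ i, μ (A i) ≤ 1 := by
    simpa using sum_measure_le_measure_univ (μ := μ) (s := Finset.univ)
      (fun i _ => (hmeas i).nullMeasurableSet)
      (fun i _ j _ hij => (hdisj hij).aedisjoint)
  calc μ.prod μ (closePairs h σ) ^ 2 ≤ (∑ i, μ.prod μ (B i)) ^ 2 := by gcongr
    _ ≤ (∑ i, μ (A i)) * ∑ i, (μ (A i))⁻¹ * μ.prod μ (B i) ^ 2 :=
        ENNReal.sq_sum_le_sum_mul_sum_inv_mul_sq _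
          (fun i => ne_top_of_le_ne_top (measure_ne_top μ _) (hBA i))
          (fun i => measure_ne_top μ _) (fun i h0 => nonpos_iff_eq_zero.1 (h0 ▸ hBA i))
    _ ≤ 1 * ∑ i, (μ (A i))⁻¹ * μ.prod μ (B i) ^ 2 := by gcongr
    _ ≤ ∑ i, (μ (A i))⁻¹ * μ.prod μ ((A i ×ˢ A i) ∩ closePairs h (2 * σ)) := by
        rw [one_mul]
        gcongr with i
        exact sq_measure_prod_closePairs_le μ (hmeas i) hh σ

/-- First localization lemma: for a probability measure `μ` on `X`, a finite measurable
partition `(A i)` of `X` with positive masses, a measurable `h : X → ℝ` and `σ > 0`,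
`((μ ⊗ μ){|h x - h x'| ≤ σ})² ≤ ∑ i, (μ (A i))⁻¹ · (μ ⊗ μ){(x, x̃) ∈ A i × A i, |h x - h x̃| ≤ 2σ}`. -/
theorem stmt_2 {X : Type*} [MeasurableSpace X] (μ : Measure X) [IsProbabilityMeasure μ]
    {I : Type*} [Fintype I] (A : I → Set X)
    (hmeas : ∀ i, MeasurableSet (A i))
    (hdisj : Pairwise (Function.onFun Disjoint A))
    (hcover : (⋃ i, A i) = Set.univ)
    (hpos : ∀ i, 0 < μ (A i))
    (h : X → ℝ) (hh : Measurable h) (σ : ℝ) (hσ : 0 < σ) :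
    ((μ.prod μ) {p : X × X | |h p.1 - h p.2| ≤ σ}) ^ 2 ≤
      ∑ i : I, (μ (A i))⁻¹ *
        (μ.prod μ) ((A i ×ˢ A i) ∩ {p : X × X | |h p.1 - h p.2| ≤ 2 * σ}) :=
  stmt_2_general μ A hmeas hdisj hcover h hh σ
end

section
/- Second localization lemma: Let λ_X and λ_Y be measures on measurable spaces X and Y such that the product measure λ_Z := λ_X ⊗ λ_Y on Z := X × Y is a probability measure. Let (X_i)_{i ∈ I} be a finite measurable partition of X with λ_X(X_i) > 0 for all i, and (Y_j)_{j ∈ J} a finite measurable partition of Y with λ_Y(Y_j) > 0 for all j; set Z_{i,j} := X_i × Y_j. Let h : Z → ℝ be measurable and σ > 0. Then ((λ_Z ⊗ λ_Z){((x,y),(x',y')) ∈ Z × Z : |h(x,y) − h(x',y) − h(x,y') + h(x',y')| ≤ σ})⁴ ≤ Σ_{(i,j) ∈ I × J} (1 / λ_Z(Z_{i,j})) · (λ_Z ⊗ λ_Z){((x,y),(x',y')) ∈ Z_{i,j} × Z_{i,j} : |h(x,y) − h(x',y) − h(x,y') + h(x',y')| ≤ 4σ}. -/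
/-!
Write `Δ` for the mixed difference of `h` and `S_z = {z' | |Δ(z, z')| ≤ σ}`. By Fubini and Jensen
the left-hand side is `(∫ λ(S_z) dλ(z))⁴ ≤ ∫ λ(S_z)⁴ dλ(z)`, so it suffices to bound `λ(S)⁴` for a
single measurable `S`. Splitting `S` along the rectangles `Z_{i,j}` and applying Jensen with weights
`λ(Z_{i,j})` reduces this to the box Cauchy–Schwarz inequality
`λ(T)⁴ ≤ λ(Z_{i,j})² (λ ⊗ λ)(□T)` for `T ⊆ Z_{i,j}`, where `□T` is the set of pairs
`((x, y), (x', y'))` whose four corners `(x, y), (x', y), (x, y'), (x', y')` lie in `T`.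
Finally, corners in `S_z` force `|Δ| ≤ 4σ`, because `Δ(z₁, z₂)` is an alternating sum of the four
mixed differences based at `z` of the corners spanned by `z₁` and `z₂`.
-/

open MeasureTheory Set Function
open scoped ENNReal

section Finiteness

variable {X Y : Type*} [MeasurableSpace X] [MeasurableSpace Y]

-- Without s-finiteness `Measure.prod_prod` is unavailable; `μ.prod ν` is the bind of
-- `x ↦ map (Prod.mk x) ν`, which vanishes unless this kernel is measurable.
lemma measure_univ_mul_measure_univ_of_isProbabilityMeasure_prod (μ : Measure X) (ν : Measure Y)
    [IsProbabilityMeasure (μ.prod ν)] : μ univ * ν univ = 1 := by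
  have hκ : AEMeasurable (fun x => (ν.map (Prod.mk x))) μ := by
    by_contra hκ
    apply IsProbabilityMeasure.ne_zero (μ.prod ν)
    rw [Measure.prod, Measure.bind, Measure.map_of_not_aemeasurable hκ, Measure.join_zero]
  calc μ univ * ν univ = ∫⁻ x, ν.map (Prod.mk x) univ ∂μ := by
        simp [Measure.map_apply measurable_prodMk_left .univ, mul_comm]
    _ = μ.prod ν univ := by rw [Measure.prod, Measure.bind_apply .univ hκ]
    _ = 1 := measure_univ

lemma isFiniteMeasure_left_of_isProbabilityMeasure_prod (μ : Measure X) (ν : Measure Y)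
    [IsProbabilityMeasure (μ.prod ν)] : IsFiniteMeasure μ :=
  have h := measure_univ_mul_measure_univ_of_isProbabilityMeasure_prod μ ν
  ⟨ENNReal.lt_top_of_mul_ne_top_left (h ▸ ENNReal.one_ne_top) (right_ne_zero_of_mul_eq_one h)⟩

lemma isFiniteMeasure_right_of_isProbabilityMeasure_prod (μ : Measure X) (ν : Measure Y)
    [IsProbabilityMeasure (μ.prod ν)] : IsFiniteMeasure ν :=
  have h := measure_univ_mul_measure_univ_of_isProbabilityMeasure_prod μ ν
  ⟨ENNReal.lt_top_of_mul_ne_top_right (h ▸ ENNReal.one_ne_top) (left_ne_zero_of_mul_eq_one h)⟩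

end Finiteness

section CauchySchwarz

variable {α : Type*} [MeasurableSpace α] {m : Measure α} {f : α → ℝ≥0∞}

lemma lintegral_sq_le_measure_univ_mul (hf : AEMeasurable f m) :
    (∫⁻ a, f a ∂m) ^ 2 ≤ m univ * ∫⁻ a, f a ^ 2 ∂m := by
  have h : ∫⁻ a, f a ∂m ≤ m univ ^ (1 / 2 : ℝ) * (∫⁻ a, f a ^ 2 ∂m) ^ (1 / 2 : ℝ) := by
    simpa using ENNReal.lintegral_mul_le_Lp_mul_Lq m .two_two aemeasurable_const hf (f := 1)
  calc (∫⁻ a, f a ∂m) ^ 2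
      ≤ (m univ ^ (1 / 2 : ℝ) * (∫⁻ a, f a ^ 2 ∂m) ^ (1 / 2 : ℝ)) ^ 2 := by gcongr
    _ = m univ * ∫⁻ a, f a ^ 2 ∂m := by
      rw [← ENNReal.mul_rpow_of_nonneg _ _ (by norm_num), ← ENNReal.rpow_two,
        ← ENNReal.rpow_mul]
      norm_num

lemma lintegral_sq_le_measure_mul_of_support_subset {s : Set α} (hf : AEMeasurable f m)
    (hfs : support f ⊆ s) : (∫⁻ a, f a ∂m) ^ 2 ≤ m s * ∫⁻ a, f a ^ 2 ∂m := by
  have hf2s : support (fun a => f a ^ 2) ⊆ s := by simpa [support] using hfs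
  rw [← setLIntegral_eq_of_support_subset hfs, ← setLIntegral_eq_of_support_subset hf2s,
    ← Measure.restrict_apply_univ]
  exact lintegral_sq_le_measure_univ_mul hf.restrict

lemma lintegral_pow_four_le [IsProbabilityMeasure m] (hf : AEMeasurable f m) :
    (∫⁻ a, f a ∂m) ^ 4 ≤ ∫⁻ a, f a ^ 4 ∂m := by
  have hsq : ∀ g : α → ℝ≥0∞, AEMeasurable g m → (∫⁻ a, g a ∂m) ^ 2 ≤ ∫⁻ a, g a ^ 2 ∂m :=
    fun g hg => by simpa using lintegral_sq_le_measure_univ_mul hg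
  calc (∫⁻ a, f a ∂m) ^ 4 = ((∫⁻ a, f a ∂m) ^ 2) ^ 2 := by ring
    _ ≤ (∫⁻ a, f a ^ 2 ∂m) ^ 2 := by gcongr; exact hsq f hf
    _ ≤ ∫⁻ a, (f a ^ 2) ^ 2 ∂m := hsq _ (hf.pow_const 2)
    _ = ∫⁻ a, f a ^ 4 ∂m := by simp_rw [← pow_mul]

end CauchySchwarz

section Box

variable {X Y : Type*} [MeasurableSpace X] [MeasurableSpace Y]
  {μ : Measure X} {ν : Measure Y} [SFinite μ] [SFinite ν] {φ : X × Y → ℝ≥0∞}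

lemma lintegral_box_eq_lintegral_sq (hφ : Measurable φ) :
    ∫⁻ w, φ w.1 * φ (w.2.1, w.1.2) * φ (w.1.1, w.2.2) * φ w.2 ∂(μ.prod ν).prod (μ.prod ν) =
      ∫⁻ p, (∫⁻ y, φ (p.1, y) * φ (p.2, y) ∂ν) ^ 2 ∂μ.prod μ := by
  calc _ = ∫⁻ x, ∫⁻ y, ∫⁻ x', ∫⁻ y',
          φ (x, y) * φ (x', y) * φ (x, y') * φ (x', y') ∂ν ∂μ ∂ν ∂μ := by
        rw [lintegral_prod _ (by fun_prop), lintegral_prod _ (by fun_prop)]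
        refine lintegral_congr fun x => lintegral_congr fun y => ?_
        exact lintegral_prod _ (by fun_prop)
    _ = ∫⁻ x, ∫⁻ x', ∫⁻ y, ∫⁻ y',
          φ (x, y) * φ (x', y) * φ (x, y') * φ (x', y') ∂ν ∂ν ∂μ ∂μ := by
        refine lintegral_congr fun x => lintegral_lintegral_swap ?_
        fun_prop
    _ = ∫⁻ p, (∫⁻ y, φ (p.1, y) * φ (p.2, y) ∂ν) ^ 2 ∂μ.prod μ := by
        rw [lintegral_prod _ (by fun_prop)]
        refine lintegral_congr fun x => lintegral_congr fun x' => ?_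
        have hinner : ∀ y, ∫⁻ y', φ (x, y) * φ (x', y) * φ (x, y') * φ (x', y') ∂ν =
            φ (x, y) * φ (x', y) * ∫⁻ y', φ (x, y') * φ (x', y') ∂ν := fun y => by
          rw [← lintegral_const_mul _ (by fun_prop)]
          simp only [mul_assoc]
        simp only [hinner]
        rw [lintegral_mul_const _ (by fun_prop), sq]

lemma lintegral_pow_four_le_box (hφ : Measurable φ) {s : Set X} {t : Set Y}
    (hφst : support φ ⊆ s ×ˢ t) :
    (∫⁻ z, φ z ∂μ.prod ν) ^ 4 ≤ (μ s * ν t) ^ 2 *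
      ∫⁻ w, φ w.1 * φ (w.2.1, w.1.2) * φ (w.1.1, w.2.2) * φ w.2 ∂(μ.prod ν).prod (μ.prod ν) := by
  set H : Y → ℝ≥0∞ := fun y => ∫⁻ x, φ (x, y) ∂μ
  set G : X × X → ℝ≥0∞ := fun p => ∫⁻ y, φ (p.1, y) * φ (p.2, y) ∂ν
  have hHt : support H ⊆ t := fun y hy => by
    obtain ⟨x, hx⟩ : ∃ x, φ (x, y) ≠ 0 := by
      by_contra! h0
      exact hy (by simp [H, h0])
    exact (hφst hx).2
  have hGs : support G ⊆ s ×ˢ s := fun p hp => by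
    obtain ⟨y, hy⟩ : ∃ y, φ (p.1, y) * φ (p.2, y) ≠ 0 := by
      by_contra! h0
      exact hp (by simp [G, h0])
    exact ⟨(hφst (left_ne_zero_of_mul hy)).1, (hφst (right_ne_zero_of_mul hy)).1⟩
  have hH2 : ∫⁻ y, H y ^ 2 ∂ν = ∫⁻ p, G p ∂μ.prod μ := by
    have hH2y : ∀ y, H y ^ 2 = ∫⁻ p, φ (p.1, y) * φ (p.2, y) ∂μ.prod μ := fun y => by
      rw [sq]
      exact (lintegral_prod_mul (μ := μ) (ν := μ) (f := fun x => φ (x, y)) (g := fun x => φ (x, y))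
        (by fun_prop) (by fun_prop)).symm
    simp only [hH2y]
    exact lintegral_lintegral_swap (by fun_prop)
  calc (∫⁻ z, φ z ∂μ.prod ν) ^ 4 = ((∫⁻ y, H y ∂ν) ^ 2) ^ 2 := by
        rw [lintegral_prod_symm _ hφ.aemeasurable]; ring
    _ ≤ (ν t * ∫⁻ p, G p ∂μ.prod μ) ^ 2 := by
        rw [← hH2]; gcongr
        exact lintegral_sq_le_measure_mul_of_support_subset (by fun_prop) hHt
    _ ≤ ν t ^ 2 * (μ s * μ s * ∫⁻ p, G p ^ 2 ∂μ.prod μ) := by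
        rw [mul_pow, ← Measure.prod_prod]; gcongr
        exact lintegral_sq_le_measure_mul_of_support_subset (by fun_prop) hGs
    _ = _ := by rw [lintegral_box_eq_lintegral_sq hφ]; ring

end Box

section BoxSet

variable {X Y : Type*}

def boxSet (S : Set (X × Y)) : Set ((X × Y) × (X × Y)) :=
  {w | w.1 ∈ S ∧ (w.2.1, w.1.2) ∈ S ∧ (w.1.1, w.2.2) ∈ S ∧ w.2 ∈ S}

lemma boxSet_inter_prod_subset (S : Set (X × Y)) (s : Set X) (t : Set Y) :
    boxSet (S ∩ s ×ˢ t) ⊆ ((s ×ˢ t) ×ˢ (s ×ˢ t)) ∩ boxSet S := by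
  rintro w ⟨⟨h1, hst1⟩, ⟨h2, -⟩, ⟨h3, -⟩, ⟨h4, hst4⟩⟩
  exact ⟨⟨hst1, hst4⟩, h1, h2, h3, h4⟩

variable [MeasurableSpace X] [MeasurableSpace Y] {μ : Measure X} {ν : Measure Y} [SFinite μ]
  [SFinite ν]

lemma measurableSet_boxSet {S : Set (X × Y)} (hS : MeasurableSet S) : MeasurableSet (boxSet S) :=
  (measurable_fst hS).inter <|
    ((by fun_prop : Measurable fun w : (X × Y) × (X × Y) => (w.2.1, w.1.2)) hS).inter <|
      ((by fun_prop : Measurable fun w : (X × Y) × (X × Y) => (w.1.1, w.2.2)) hS).inter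
        (measurable_snd hS)

lemma measure_pow_four_le_measure_boxSet {S : Set (X × Y)} (hS : MeasurableSet S) {s : Set X}
    {t : Set Y} (hSst : S ⊆ s ×ˢ t) :
    μ.prod ν S ^ 4 ≤ (μ s * ν t) ^ 2 * (μ.prod ν).prod (μ.prod ν) (boxSet S) := by
  have hbox : ∀ w : (X × Y) × (X × Y), S.indicator (1 : X × Y → ℝ≥0∞) w.1 *
      S.indicator 1 (w.2.1, w.1.2) * S.indicator 1 (w.1.1, w.2.2) * S.indicator 1 w.2 =
      (boxSet S).indicator 1 w := by
    classical
    intro w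
    simp only [indicator_apply, boxSet, mem_ofPred_eq, Pi.one_apply]
    split_ifs <;> simp_all
  have h := lintegral_pow_four_le_box (μ := μ) (ν := ν) (measurable_one.indicator hS)
    (support_indicator_subset.trans hSst)
  rwa [lintegral_indicator_one hS, lintegral_congr hbox,
    lintegral_indicator_one (measurableSet_boxSet hS)] at h

end BoxSet

lemma ENNReal.pow_four_sum_le_sum_inv_mul {ι : Type*} [Fintype ι] (w t b : ι → ℝ≥0∞)
    (hw : ∑ i, w i = 1) (htb : ∀ i, t i ^ 4 ≤ w i ^ 2 * b i) :
    (∑ i, t i) ^ 4 ≤ ∑ i, (w i)⁻¹ * b i := by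
  have hw_top : ∀ i, w i ≠ ∞ := fun i =>
    ne_top_of_le_ne_top ENNReal.one_ne_top (hw ▸ Finset.single_le_sum (by simp) (Finset.mem_univ i))
  have ht0 : ∀ i, w i = 0 → t i = 0 := fun i h0 => by simpa [h0] using htb i
  calc (∑ i, t i) ^ 4 = (∑ i, w i * (t i / w i)) ^ 4 := by
        simp only [ENNReal.mul_div_cancel' (ht0 _) (fun h => absurd h (hw_top _))]
    _ ≤ ∑ i, w i * (t i / w i) ^ 4 := by
        simpa only [ENNReal.rpow_ofNat] using
          ENNReal.rpow_arith_mean_le_arith_mean_rpow Finset.univ w (fun i => t i / w i) hw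
            (p := 4) (by norm_num)
    _ ≤ ∑ i, (w i)⁻¹ * b i := Finset.sum_le_sum fun i _ => ?_
  rcases eq_or_ne (w i) 0 with h0 | h0
  · simp [h0]
  have hww : w i * (w i)⁻¹ = 1 := ENNReal.mul_inv_cancel h0 (hw_top i)
  calc w i * (t i / w i) ^ 4 = t i ^ 4 * (w i)⁻¹ ^ 3 * (w i * (w i)⁻¹) := by
        rw [div_eq_mul_inv]; ring
    _ ≤ w i ^ 2 * b i * (w i)⁻¹ ^ 3 := by rw [hww, mul_one]; gcongr; exact htb i
    _ = (w i)⁻¹ * b i * (w i * (w i)⁻¹) ^ 2 := by ring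
    _ = (w i)⁻¹ * b i := by rw [hww, one_pow, mul_one]

section Localization

variable {X Y : Type*} [MeasurableSpace X] [MeasurableSpace Y]
  {μ : Measure X} {ν : Measure Y} [SFinite μ] [SFinite ν]

lemma measure_pow_four_le_sum_inv_mul_measure_boxSet [IsProbabilityMeasure (μ.prod ν)]
    {ι : Type*} [Fintype ι] {A : ι → Set X} {B : ι → Set Y} (hA : ∀ i, MeasurableSet (A i))
    (hB : ∀ i, MeasurableSet (B i)) (hdisj : Pairwise (Disjoint on fun i => A i ×ˢ B i))
    (hcover : ⋃ i, A i ×ˢ B i = univ) {S : Set (X × Y)} (hS : MeasurableSet S) :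
    μ.prod ν S ^ 4 ≤ ∑ i, (μ.prod ν (A i ×ˢ B i))⁻¹ *
      (μ.prod ν).prod (μ.prod ν) (boxSet (S ∩ A i ×ˢ B i)) := by
  have hAB : ∀ i, MeasurableSet (A i ×ˢ B i) := fun i => (hA i).prod (hB i)
  have hsum : ∀ T, MeasurableSet T → μ.prod ν T = ∑ i, μ.prod ν (T ∩ A i ×ˢ B i) := by
    intro T hT
    have hdisjT : Pairwise (Disjoint on fun i => T ∩ A i ×ˢ B i) :=
      hdisj.mono fun _ _ => Disjoint.mono inter_subset_right inter_subset_right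
    rw [← tsum_fintype (L := .unconditional _), ← measure_iUnion hdisjT fun i => hT.inter (hAB i),
      ← inter_iUnion, hcover, inter_univ]
  rw [hsum S hS]
  refine ENNReal.pow_four_sum_le_sum_inv_mul _ _ _ ?_ fun i => ?_
  · simpa using (hsum univ .univ).symm
  · rw [Measure.prod_prod]
    exact measure_pow_four_le_measure_boxSet (hS.inter (hAB i)) inter_subset_right

end Localization

lemma Pairwise.disjoint_prod {ι κ X Y : Type*} {A : ι → Set X} {B : κ → Set Y}
    (hA : Pairwise (Disjoint on A)) (hB : Pairwise (Disjoint on B)) :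
    Pairwise (Disjoint on fun p : ι × κ => A p.1 ×ˢ B p.2) := by
  rintro ⟨i, j⟩ ⟨i', j'⟩ hne
  rw [onFun, Set.disjoint_prod]
  by_cases hi : i = i'
  · subst hi
    exact Or.inr (hB fun hj => hne (congrArg _ hj))
  · exact Or.inl (hA hi)

section MixedDiff

variable {X Y : Type*}

def mixedDiff (h : X × Y → ℝ) (z z' : X × Y) : ℝ :=
  h z - h (z'.1, z.2) - h (z.1, z'.2) + h z'

lemma abs_mixedDiff_le (h : X × Y → ℝ) (u z z' : X × Y) :
    |mixedDiff h z z'| ≤ |mixedDiff h u z| + |mixedDiff h u (z'.1, z.2)| +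
      |mixedDiff h u (z.1, z'.2)| + |mixedDiff h u z'| := by
  have hsum : mixedDiff h z z' = mixedDiff h u z - mixedDiff h u (z'.1, z.2) -
      mixedDiff h u (z.1, z'.2) + mixedDiff h u z' := by
    simp only [mixedDiff]; ring
  rw [hsum]
  refine (abs_add_le _ _).trans (add_le_add_left ((abs_sub _ _).trans
    (add_le_add_left (abs_sub _ _) _)) _)

lemma boxSet_abs_mixedDiff_le_subset (h : X × Y → ℝ) (u : X × Y) (σ : ℝ) :
    boxSet {z | |mixedDiff h u z| ≤ σ} ⊆ {w | |mixedDiff h w.1 w.2| ≤ 4 * σ} := by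
  rintro w ⟨h1, h2, h3, h4⟩
  have := abs_mixedDiff_le h u w.1 w.2
  simp only [mem_ofPred_eq] at *
  linarith

lemma measurable_mixedDiff [MeasurableSpace X] [MeasurableSpace Y] {h : X × Y → ℝ}
    (hh : Measurable h) : Measurable fun w : (X × Y) × (X × Y) => mixedDiff h w.1 w.2 := by
  unfold mixedDiff
  fun_prop

end MixedDiff

theorem stmt_3_general {X Y : Type*} [MeasurableSpace X] [MeasurableSpace Y]
    (μ : Measure X) (ν : Measure Y) [IsProbabilityMeasure (μ.prod ν)]
    {I J : Type*} [Fintype I] [Fintype J]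
    (A : I → Set X) (B : J → Set Y)
    (hAmeas : ∀ i, MeasurableSet (A i)) (hBmeas : ∀ j, MeasurableSet (B j))
    (hAdisj : Pairwise (Function.onFun Disjoint A))
    (hBdisj : Pairwise (Function.onFun Disjoint B))
    (hAcover : (⋃ i, A i) = Set.univ) (hBcover : (⋃ j, B j) = Set.univ)
    (h : X × Y → ℝ) (hh : Measurable h) (σ : ℝ) :
    (((μ.prod ν).prod (μ.prod ν))
        {w : (X × Y) × (X × Y) |
          |h w.1 - h (w.2.1, w.1.2) - h (w.1.1, w.2.2) + h w.2| ≤ σ}) ^ 4 ≤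
      ∑ i : I, ∑ j : J, ((μ.prod ν) (A i ×ˢ B j))⁻¹ *
        ((μ.prod ν).prod (μ.prod ν))
          (((A i ×ˢ B j) ×ˢ (A i ×ˢ B j)) ∩
            {w : (X × Y) × (X × Y) |
              |h w.1 - h (w.2.1, w.1.2) - h (w.1.1, w.2.2) + h w.2| ≤ 4 * σ}) := by
  have := isFiniteMeasure_left_of_isProbabilityMeasure_prod μ ν
  have := isFiniteMeasure_right_of_isProbabilityMeasure_prod μ ν
  have hE : ∀ c : ℝ, MeasurableSet {w : (X × Y) × (X × Y) | |mixedDiff h w.1 w.2| ≤ c} :=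
    fun c => measurableSet_le (measurable_mixedDiff hh).abs measurable_const
  have hslice : ∀ z, μ.prod ν {z' | |mixedDiff h z z'| ≤ σ} ^ 4 ≤
      ∑ i, ∑ j, (μ.prod ν (A i ×ˢ B j))⁻¹ * (μ.prod ν).prod (μ.prod ν)
        (((A i ×ˢ B j) ×ˢ (A i ×ˢ B j)) ∩ {w | |mixedDiff h w.1 w.2| ≤ 4 * σ}) := fun z => by
    rw [← Fintype.sum_prod_type']
    refine (measure_pow_four_le_sum_inv_mul_measure_boxSet (fun p => hAmeas p.1)
      (fun p => hBmeas p.2) (hAdisj.disjoint_prod hBdisj)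
      (by rw [iUnion_prod, hAcover, hBcover, univ_prod_univ]) (measurable_prodMk_left (hE σ))).trans
      (Finset.sum_le_sum fun p _ => ?_)
    gcongr
    exact (boxSet_inter_prod_subset _ _ _).trans
      (inter_subset_inter_right _ (boxSet_abs_mixedDiff_le_subset h z σ))
  calc (μ.prod ν).prod (μ.prod ν) {w | |mixedDiff h w.1 w.2| ≤ σ} ^ 4
      = (∫⁻ z, μ.prod ν {z' | |mixedDiff h z z'| ≤ σ} ∂μ.prod ν) ^ 4 := by
        rw [Measure.prod_apply (hE σ)]; rfl
    _ ≤ ∫⁻ z, μ.prod ν {z' | |mixedDiff h z z'| ≤ σ} ^ 4 ∂μ.prod ν :=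
        lintegral_pow_four_le (measurable_measure_prodMk_left (hE σ)).aemeasurable
    _ ≤ _ := lintegral_le_const (ae_of_all _ hslice)

/-- Second localization lemma: for measures `μ` on `X` and `ν` on `Y` whose product
`λ_Z := μ ⊗ ν` is a probability measure on `Z = X × Y`, finite measurable partitions
`(A i)` of `X` and `(B j)` of `Y` with positive masses, a measurable `h : Z → ℝ` and
`σ > 0`, the fourth power of `(λ_Z ⊗ λ_Z)` of the set where the mixed difference of `h`
is at most `σ` is bounded by the localized sums over the rectangles `Z_{i,j} = A i × B j`. -/
theorem stmt_3 {X Y : Type*} [MeasurableSpace X] [MeasurableSpace Y]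
    (μ : Measure X) (ν : Measure Y) [IsProbabilityMeasure (μ.prod ν)]
    {I J : Type*} [Fintype I] [Fintype J]
    (A : I → Set X) (B : J → Set Y)
    (hAmeas : ∀ i, MeasurableSet (A i)) (hBmeas : ∀ j, MeasurableSet (B j))
    (hAdisj : Pairwise (Function.onFun Disjoint A))
    (hBdisj : Pairwise (Function.onFun Disjoint B))
    (hAcover : (⋃ i, A i) = Set.univ) (hBcover : (⋃ j, B j) = Set.univ)
    (hApos : ∀ i, 0 < μ (A i)) (hBpos : ∀ j, 0 < ν (B j))
    (h : X × Y → ℝ) (hh : Measurable h) (σ : ℝ) (hσ : 0 < σ) :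
    (((μ.prod ν).prod (μ.prod ν))
        {w : (X × Y) × (X × Y) |
          |h w.1 - h (w.2.1, w.1.2) - h (w.1.1, w.2.2) + h w.2| ≤ σ}) ^ 4 ≤
      ∑ i : I, ∑ j : J, ((μ.prod ν) (A i ×ˢ B j))⁻¹ *
        ((μ.prod ν).prod (μ.prod ν))
          (((A i ×ˢ B j) ×ˢ (A i ×ˢ B j)) ∩
            {w : (X × Y) × (X × Y) |
              |h w.1 - h (w.2.1, w.1.2) - h (w.1.1, w.2.2) + h w.2| ≤ 4 * σ}) :=
  stmt_3_general μ ν A B hAmeas hBmeas hAdisj hBdisj hAcover hBcover h hh σ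
end

section
/- Lagrange interpolation bound: Let d ≥ 1 and let a₀, a₁, …, a_d ∈ [−1, 1] be d + 1 pairwise distinct points. Then for every real polynomial P of degree at most d, (d + 1)⁻¹ · 2^(−d) · (min_{i ≠ j} |a_i − a_j|)^d · ‖P‖_{∞,[−1,1]} ≤ max_{0 ≤ i ≤ d} |P(a_i)| ≤ ‖P‖_{∞,[−1,1]}. -/
/-- Lagrange interpolation bound: for `d ≥ 1`, pairwise distinct points
`a₀, …, a_d ∈ [-1,1]` and a real polynomial `P` of degree at most `d`,
`(d+1)⁻¹ · 2^(-d) · (min_{i ≠ j} |a_i - a_j|)^d · ‖P‖_{∞,[-1,1]} ≤ max_i |P(a_i)|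
  ≤ ‖P‖_{∞,[-1,1]}`. -/
theorem stmt_5 (d : ℕ) (hd : 1 ≤ d) (a : Fin (d + 1) → ℝ)
    (ha : ∀ i, a i ∈ Set.Icc (-1 : ℝ) 1) (hinj : Function.Injective a)
    (P : Polynomial ℝ) (hdeg : P.natDegree ≤ d) :
    ((d : ℝ) + 1)⁻¹ * (2 : ℝ) ^ (-(d : ℤ)) *
        (sInf {x : ℝ | ∃ i j : Fin (d + 1), i ≠ j ∧ x = |a i - a j|}) ^ d *
        (⨆ t : Set.Icc (-1 : ℝ) 1, |P.eval (t : ℝ)|)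
      ≤ (⨆ i : Fin (d + 1), |P.eval (a i)|) ∧
    (⨆ i : Fin (d + 1), |P.eval (a i)|) ≤ ⨆ t : Set.Icc (-1 : ℝ) 1, |P.eval (t : ℝ)| := by
  classical
  set S : Set ℝ := {x : ℝ | ∃ i j : Fin (d + 1), i ≠ j ∧ x = |a i - a j|} with hS
  set δ : ℝ := sInf S with hδ
  set M : ℝ := ⨆ t : Set.Icc (-1 : ℝ) 1, |P.eval (t : ℝ)| with hM
  set m : ℝ := ⨆ i : Fin (d + 1), |P.eval (a i)| with hm
  have hbddM : BddAbove (Set.range fun t : Set.Icc (-1:ℝ) 1 => |P.eval (t:ℝ)|) := by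
    have hc : IsCompact (Set.Icc (-1:ℝ) 1) := isCompact_Icc
    have hcont : ContinuousOn (fun t : ℝ => |P.eval t|) (Set.Icc (-1:ℝ) 1) :=
      (P.continuous_aeval.abs).continuousOn
    have := hc.bddAbove_image hcont
    rwa [Set.image_eq_range] at this
  have hleM : ∀ t ∈ Set.Icc (-1:ℝ) 1, |P.eval t| ≤ M := fun t ht =>
    le_ciSup hbddM (⟨t, ht⟩ : Set.Icc (-1:ℝ) 1)
  have hbddm : BddAbove (Set.range fun i : Fin (d+1) => |P.eval (a i)|) :=
    Set.Finite.bddAbove (Set.finite_range _)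
  have hlem : ∀ i, |P.eval (a i)| ≤ m := fun i => le_ciSup hbddm i
  have hmM : m ≤ M := ciSup_le fun i => hleM _ (ha i)
  refine ⟨?_, hmM⟩
  have hm0 : 0 ≤ m := le_trans (abs_nonneg _) (hlem 0)
  -- properties of δ
  have h01 : (0 : Fin (d+1)) ≠ 1 := by
    have : (1:ℕ) < d + 1 := by omega
    simp [Fin.ext_iff, Fin.val_one, Nat.mod_eq_of_lt this]
  have hSne : S.Nonempty := ⟨|a 0 - a 1|, 0, 1, h01, rfl⟩
  have hSfin : S.Finite := by
    apply Set.Finite.subset (Set.finite_range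
      (fun p : Fin (d+1) × Fin (d+1) => |a p.1 - a p.2|))
    rintro x ⟨i, j, _, rfl⟩
    exact ⟨(i, j), rfl⟩
  have hδmem : δ ∈ S := hSne.csInf_mem hSfin
  have hδpos : 0 < δ := by
    obtain ⟨i, j, hij, hx⟩ := hδmem
    rw [hx]
    exact abs_sub_pos.2 fun h => hij (hinj h)
  have hδle : ∀ i j : Fin (d+1), i ≠ j → δ ≤ |a i - a j| := fun i j hij =>
    csInf_le hSfin.bddBelow ⟨i, j, hij, rfl⟩
  -- Lagrange interpolation
  have hdeglt : P.degree < (Finset.univ : Finset (Fin (d+1))).card := by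
    rw [Finset.card_univ, Fintype.card_fin]
    calc P.degree ≤ (P.natDegree : WithBot ℕ) := Polynomial.degree_le_natDegree
      _ < ((d+1 : ℕ) : WithBot ℕ) := by exact_mod_cast Nat.lt_succ_of_le hdeg
  have hPinterp := Lagrange.eq_interpolate (s := Finset.univ) (v := a)
    (hinj.injOn) hdeglt
  -- pointwise bound
  have key : ∀ t ∈ Set.Icc (-1:ℝ) 1, δ ^ d * |P.eval t| ≤ 2 ^ d * ((d + 1) * m) := by
    intro t ht
    have heval : P.eval t = ∑ i : Fin (d+1),
        P.eval (a i) * ∏ j ∈ Finset.univ.erase i, ((a i - a j)⁻¹ * (t - a j)) := by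
      conv_lhs => rw [hPinterp]
      rw [Lagrange.interpolate_apply]
      rw [Polynomial.eval_finset_sum]
      refine Finset.sum_congr rfl fun i _ => ?_
      rw [Polynomial.eval_mul, Polynomial.eval_C, Lagrange.basis,
        Polynomial.eval_prod]
      congr 1
      refine Finset.prod_congr rfl fun j _ => ?_
      simp [Lagrange.basisDivisor]
    have hcard : ∀ i : Fin (d+1), (Finset.univ.erase i).card = d := by
      intro i
      rw [Finset.card_erase_of_mem (Finset.mem_univ i), Finset.card_univ,
        Fintype.card_fin]
      simp
    calc δ ^ d * |P.eval t|
        ≤ δ ^ d * ∑ i : Fin (d+1), |P.eval (a i)| *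
            ∏ j ∈ Finset.univ.erase i, |(a i - a j)⁻¹ * (t - a j)| := by
          apply mul_le_mul_of_nonneg_left _ (le_of_lt (pow_pos hδpos d))
          rw [heval]
          refine le_trans (Finset.abs_sum_le_sum_abs _ _) ?_
          refine le_of_eq (Finset.sum_congr rfl fun i _ => ?_)
          rw [abs_mul, Finset.abs_prod]
      _ = ∑ i : Fin (d+1), |P.eval (a i)| *
            ∏ j ∈ Finset.univ.erase i, (δ * |(a i - a j)⁻¹ * (t - a j)|) := by
          rw [Finset.mul_sum]
          refine Finset.sum_congr rfl fun i _ => ?_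
          rw [Finset.prod_mul_distrib, Finset.prod_const, hcard]
          ring
      _ ≤ ∑ i : Fin (d+1), m * ∏ j ∈ Finset.univ.erase i, (2:ℝ) := by
          refine Finset.sum_le_sum fun i _ => ?_
          refine mul_le_mul (hlem i) ?_ ?_ hm0
          · refine Finset.prod_le_prod (fun j _ => ?_) (fun j hj => ?_)
            · positivity
            · have hij : i ≠ j := (Finset.ne_of_mem_erase hj).symm
              have hne : a i ≠ a j := fun h => hij (hinj h)
              have h1 : δ * |(a i - a j)⁻¹ * (t - a j)| =
                  (δ / |a i - a j|) * |t - a j| := by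
                rw [abs_mul, abs_inv]
                ring
              rw [h1]
              have h2 : δ / |a i - a j| ≤ 1 := by
                rw [div_le_one (abs_sub_pos.2 hne)]
                exact hδle i j hij
              have h3 : |t - a j| ≤ 2 := by
                have h4 := ha j
                rw [abs_sub_le_iff]
                constructor <;> [skip; skip] <;>
                  · obtain ⟨hl, hr⟩ := h4; obtain ⟨hl', hr'⟩ := ht; linarith
              calc δ / |a i - a j| * |t - a j| ≤ 1 * 2 := by
                    refine mul_le_mul h2 h3 (abs_nonneg _) ?_
                    positivity
                _ = 2 := one_mul 2
          · positivity
      _ = (d + 1) * (m * 2 ^ d) := by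
          simp only [Finset.prod_const, hcard]
          rw [Finset.sum_const, Finset.card_univ, Fintype.card_fin]
          push_cast
          ring
      _ = 2 ^ d * ((d + 1) * m) := by ring
  -- conclude
  have hMbound : δ ^ d * M ≤ 2 ^ d * ((d + 1) * m) := by
    have hδd : (0:ℝ) < δ ^ d := pow_pos hδpos d
    rw [mul_comm, ← le_div_iff₀ hδd]
    haveI : Nonempty (Set.Icc (-1:ℝ) 1) := ⟨⟨0, by norm_num⟩⟩
    refine ciSup_le fun t => ?_
    rw [le_div_iff₀ hδd, mul_comm]
    exact key t t.2
  rw [zpow_neg, zpow_natCast]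
  have hd1 : (0:ℝ) < (d:ℝ) + 1 := by positivity
  have h2d : (0:ℝ) < 2 ^ d := by positivity
  rw [mul_assoc, mul_assoc]
  rw [inv_mul_le_iff₀ hd1, inv_mul_le_iff₀ h2d]
  calc δ ^ d * M ≤ 2 ^ d * ((d + 1) * m) := hMbound
    _ = 2 ^ d * (((d:ℝ) + 1) * m) := by push_cast; ring
end

section
/- Separated points in uniformly perfect metric spaces: For every κ ∈ (0,1) and every integer k ≥ 1 there exists δ_k ∈ (0,1), depending only on κ and k, such that for every nonempty κ-uniformly perfect metric space (K, d) there exist points x₁, …, x_k ∈ K such that the open balls B(x_i, δ_k), 1 ≤ i ≤ k, are pairwise disjoint. -/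
/-- Separated points in uniformly perfect metric spaces: for every `κ ∈ (0,1)` and
integer `k ≥ 1` there exists `δ_k ∈ (0,1)`, depending only on `κ` and `k`, such that
every nonempty `κ`-uniformly perfect metric space contains points `x₁, …, x_k` whose
open balls of radius `δ_k` are pairwise disjoint. -/
theorem stmt_6 (κ : ℝ) (hκ : κ ∈ Set.Ioo (0 : ℝ) 1) (k : ℕ) (hk : 1 ≤ k) :
    ∃ δ ∈ Set.Ioo (0 : ℝ) 1,
      ∀ (K : Type) [MetricSpace K] [Nonempty K],
        (∀ σ ∈ Set.Ioo (0 : ℝ) 1, ∀ x : K, ∃ y : K, κ * σ ≤ dist x y ∧ dist x y ≤ σ) →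
        ∃ x : Fin k → K,
          Pairwise fun i j => Disjoint (Metric.ball (x i) δ) (Metric.ball (x j) δ) := by
  obtain ⟨hκ0, hκ1⟩ := hκ
  set c : ℝ := κ / 3 with hc
  have hc0 : 0 < c := by positivity
  have hc1 : c < 1 := by rw [hc]; linarith
  refine ⟨c ^ (k - 1) / 2, ⟨by positivity, ?_⟩, ?_⟩
  · have : c ^ (k - 1) ≤ 1 := pow_le_one₀ hc0.le hc1.le
    linarith
  intro K _ _ h
  set x₀ : K := Classical.arbitrary K
  have hσ : ∀ i : ℕ, c ^ i / 2 ∈ Set.Ioo (0 : ℝ) 1 := by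
    intro i
    have : c ^ i ≤ 1 := pow_le_one₀ hc0.le hc1.le
    exact ⟨by positivity, by linarith⟩
  have hy : ∀ i : ℕ, ∃ y : K, κ * (c ^ i / 2) ≤ dist x₀ y ∧ dist x₀ y ≤ c ^ i / 2 :=
    fun i => h _ (hσ i) x₀
  choose y hy1 hy2 using hy
  refine ⟨fun i => y i, ?_⟩
  have key : ∀ i j : ℕ, i < j → j < k → 2 * (c ^ (k - 1) / 2) ≤ dist (y i) (y j) := by
    intro i j hij hjk
    have h1 : dist x₀ (y i) - dist x₀ (y j) ≤ dist (y i) (y j) := by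
      have := dist_triangle x₀ (y j) (y i)
      have hd := dist_comm (y j) (y i)
      linarith [dist_triangle x₀ (y j) (y i), dist_comm (y j) (y i) ▸ this]
    have h2 : c ^ j ≤ c ^ (i + 1) := pow_le_pow_of_le_one hc0.le hc1.le hij
    have h3 : c ^ (i + 1) ≤ κ * (c ^ i / 2) - c ^ (i + 1) / 2 := by
      have hps : c ^ (i + 1) = c ^ i * (κ / 3) := by rw [pow_succ, hc]
      rw [hps]; exact le_of_eq (by ring)
    have h4 : c ^ (i + 1) ≤ κ * (c ^ i / 2) - c ^ j / 2 := by linarith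
    have h5 : c ^ (k - 1) ≤ c ^ (i + 1) := by
      apply pow_le_pow_of_le_one hc0.le hc1.le
      omega
    have := hy1 i
    have := hy2 j
    linarith
  intro i j hij
  rcases lt_or_gt_of_ne (Fin.val_ne_of_ne hij) with h' | h'
  · exact Metric.ball_disjoint_ball (by linarith [key i j h' j.isLt])
  · exact (Metric.ball_disjoint_ball (by linarith [key j i h' i.isLt])).symm
end

section
/- Polynomials are large on a definite interval near a uniformly perfect set: For every integer d ≥ 1 and every κ ∈ (0,1) there exists κ̃ ∈ (0,1), depending only on κ and d, such that the following holds. Let ρ ∈ (0,1] with κ < ρ/100, and let K ⊆ (−ρ, ρ) be a κ-uniformly perfect subset of ℝ containing 0. Then for every real polynomial P of degree at most d there exists z₀ ∈ K ∩ (−ρ/2, ρ/2) such that |P(z)| ≥ κ̃ · ‖P‖_{∞,[−1,1]} for all z ∈ [z₀ − κ̃, z₀ + κ̃]. -/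
/-!
Starting from `0 ∈ K` and applying uniform perfectness at the scales `κ (κ/4)^k`, one finds
points `x₀ = 0, x₁, …, x_d` of `K`, all within `2κ` of `0` and pairwise at distance at least
`δ = κ²/2 · (κ/4)^d`: the `k`-th step is at least `κ` times its scale, while all later steps
together are at most half of that. Lagrange interpolation at these `d + 1` nodes bounds
`‖P‖_{∞,[-1,1]}` by `(d + 1)(3/δ)^d · max_i |P(x_i)|`, and also bounds how much `P` can vary
near the node `x_I` where `|P(x_i)|` is largest. Hence `|P| ≥ |P(x_I)|/2` on an interval around
`x_I` whose radius depends only on `κ` and `d`.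
-/

open Finset Polynomial

lemma abs_sub_le_of_geometric_steps {x : ℕ → ℝ} {C q : ℝ} (hq : q ≤ 1 / 2)
    (h : ∀ k, |x k - x (k + 1)| ≤ C * q ^ k) (i m : ℕ) : |x i - x (i + m)| ≤ 2 * C * q ^ i := by
  induction m generalizing i with
  | zero =>
    simp only [add_zero, sub_self, abs_zero]
    linarith [(abs_nonneg _).trans (h i)]
  | succ m ih =>
    have hCq : 0 ≤ C * q ^ i := (abs_nonneg _).trans (h i)
    calc |x i - x (i + (m + 1))| ≤ |x i - x (i + 1)| + |x (i + 1) - x (i + 1 + m)| := by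
          rw [show i + (m + 1) = i + 1 + m by omega]; exact abs_sub_le _ _ _
      _ ≤ C * q ^ i + 2 * C * q ^ (i + 1) := add_le_add (h i) (ih (i + 1))
      _ = C * q ^ i * (1 + 2 * q) := by ring
      _ ≤ C * q ^ i * 2 := by gcongr; linarith
      _ = 2 * C * q ^ i := by ring

def IsUniformlyPerfect (κ : ℝ) (K : Set ℝ) : Prop :=
  ∀ σ ∈ Set.Ioo (0 : ℝ) 1, ∀ x ∈ K, ∃ y ∈ K, κ * σ ≤ |x - y| ∧ |x - y| ≤ σ

namespace IsUniformlyPerfect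

variable {κ σ x₀ : ℝ} {K : Set ℝ}

lemma exists_seq (hK : IsUniformlyPerfect κ K) (hκ : 0 < κ) (hκ2 : κ ≤ 2)
    (hσ : σ ∈ Set.Ioo 0 1) (hx₀ : x₀ ∈ K) :
    ∃ x : ℕ → ℝ, (∀ k, x k ∈ K) ∧ (∀ k, |x k - x₀| ≤ 2 * σ) ∧
      ∀ i j, i < j → κ / 2 * σ * (κ / 4) ^ i ≤ |x i - x j| := by
  have hscale : ∀ k, σ * (κ / 4) ^ k ∈ Set.Ioo (0 : ℝ) 1 := fun k =>
    ⟨by have := hσ.1; positivity,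
      mul_lt_one_of_nonneg_of_lt_one_left hσ.1.le hσ.2
        (pow_le_one₀ (by positivity) (by linarith))⟩
  have hnext : ∀ k (y : K), ∃ y' : K,
      κ * (σ * (κ / 4) ^ k) ≤ |(y : ℝ) - y'| ∧ |(y : ℝ) - y'| ≤ σ * (κ / 4) ^ k := by
    intro k y
    obtain ⟨y', hy', h⟩ := hK _ (hscale k) y y.2
    exact ⟨⟨y', hy'⟩, h⟩
  choose f hf using hnext
  let x : ℕ → K := fun k => Nat.rec (motive := fun _ => K) ⟨x₀, hx₀⟩ f k
  have hx_succ : ∀ k, x (k + 1) = f k (x k) := fun _ => rfl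
  have hstep : ∀ k, |(x k : ℝ) - x (k + 1)| ≤ σ * (κ / 4) ^ k := fun k => by
    rw [hx_succ]; exact (hf k (x k)).2
  have hdrift := abs_sub_le_of_geometric_steps (by linarith) hstep
  refine ⟨fun k => x k, fun k => (x k).2, fun k => ?_, fun i j hij => ?_⟩
  · have := hdrift 0 k
    rw [zero_add, pow_zero, mul_one, abs_sub_comm] at this
    exact this
  · obtain ⟨m, rfl⟩ : ∃ m, j = i + 1 + m := ⟨j - (i + 1), by omega⟩
    have hfar := (hf i (x i)).1
    rw [← hx_succ] at hfar
    have htail := hdrift (i + 1) m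
    have htri := abs_sub_le (x i : ℝ) (x (i + 1 + m)) (x (i + 1))
    rw [abs_sub_comm (x (i + 1 + m) : ℝ)] at htri
    have hq : σ * (κ / 4) ^ (i + 1) = κ / 4 * (σ * (κ / 4) ^ i) := by ring
    dsimp only
    nlinarith

lemma exists_fin_separated (hK : IsUniformlyPerfect κ K) (hκ : 0 < κ) (hκ2 : κ ≤ 2)
    (hσ : σ ∈ Set.Ioo 0 1) (hx₀ : x₀ ∈ K) (n : ℕ) :
    ∃ v : Fin (n + 1) → ℝ, (∀ i, v i ∈ K) ∧ (∀ i, |v i - x₀| ≤ 2 * σ) ∧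
      Pairwise fun i j => κ / 2 * σ * (κ / 4) ^ n ≤ |v i - v j| := by
  obtain ⟨x, hxK, hx, hsep⟩ := hK.exists_seq hκ hκ2 hσ hx₀
  have hsep' : ∀ i j : Fin (n + 1), i < j → κ / 2 * σ * (κ / 4) ^ n ≤ |x i - x j| :=
    fun i j hij => le_trans (mul_le_mul_of_nonneg_left
      (pow_le_pow_of_le_one (by positivity) (by linarith) (by omega))
      (by have := hσ.1; positivity)) (hsep i j hij)
  refine ⟨fun i => x i, fun i => hxK i, fun i => hx i, fun i j hij => ?_⟩
  rcases hij.lt_or_gt with h | h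
  · exact hsep' i j h
  · exact (hsep' j i h).trans_eq (abs_sub_comm _ _)

end IsUniformlyPerfect

section ProductBounds

variable {ι : Type*} (s : Finset ι) {f g : ι → ℝ} {R ε : ℝ}

lemma abs_prod_le_pow_card (hf : ∀ i ∈ s, |f i| ≤ R) : |∏ i ∈ s, f i| ≤ R ^ #s := by
  rw [abs_prod, ← prod_const]
  exact prod_le_prod (fun i _ => abs_nonneg _) hf

lemma abs_prod_sub_prod_le (hR : 1 ≤ R) (hf : ∀ i ∈ s, |f i| ≤ R)
    (hg : ∀ i ∈ s, |g i| ≤ R) (hfg : ∀ i ∈ s, |f i - g i| ≤ ε) :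
    |∏ i ∈ s, f i - ∏ i ∈ s, g i| ≤ #s * ε * R ^ #s := by
  induction s using Finset.cons_induction with
  | empty => simp
  | cons a s ha ih =>
    simp only [forall_mem_cons] at hf hg hfg
    have hR0 : 0 ≤ R := zero_le_one.trans hR
    have hε : 0 ≤ ε := (abs_nonneg _).trans hfg.1
    have hfs := abs_prod_le_pow_card s hf.2
    have ihs := ih hf.2 hg.2 hfg.2
    rw [prod_cons, prod_cons, card_cons,
      show f a * ∏ i ∈ s, f i - g a * ∏ i ∈ s, g i
        = (f a - g a) * ∏ i ∈ s, f i + g a * (∏ i ∈ s, f i - ∏ i ∈ s, g i) by ring]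
    calc _ ≤ ε * R ^ #s + R * (#s * ε * R ^ #s) := by
          refine (abs_add_le _ _).trans (add_le_add ?_ ?_) <;> rw [abs_mul]
          · exact mul_le_mul hfg.1 hfs (abs_nonneg _) hε
          · exact mul_le_mul hg.1 ihs (abs_nonneg _) hR0
      _ ≤ (#s + 1 : ℕ) * ε * R ^ (#s + 1) := by
          have hεR : ε * R ^ #s ≤ ε * R ^ (#s + 1) :=
            mul_le_mul_of_nonneg_left (pow_le_pow_right₀ hR (Nat.le_succ _)) hε
          push_cast
          rw [pow_succ] at hεR ⊢
          nlinarith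

lemma abs_sum_mul_le {a b : ι → ℝ} {M C : ℝ} (ha : ∀ i ∈ s, |a i| ≤ M)
    (hb : ∀ i ∈ s, |b i| ≤ C) : |∑ i ∈ s, a i * b i| ≤ #s * (M * C) := by
  refine (abs_sum_le_sum_abs _ _).trans ?_
  rw [← nsmul_eq_mul]
  refine sum_le_card_nsmul _ _ _ fun i hi => ?_
  rw [abs_mul]
  exact mul_le_mul (ha i hi) (hb i hi) (abs_nonneg _) ((abs_nonneg _).trans (ha i hi))

end ProductBounds

section Lagrange

variable {ι : Type*} [DecidableEq ι] {s : Finset ι} {δ R : ℝ}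

lemma eval_eq_sum_eval_mul_eval_basis {F : Type*} [Field F] {v : ι → F}
    (hvs : Set.InjOn v s) {P : F[X]} (hP : P.degree < #s) (t : F) :
    P.eval t = ∑ i ∈ s, P.eval (v i) * (Lagrange.basis s v i).eval t := by
  conv_lhs => rw [Lagrange.eq_interpolate hvs hP]
  simp [Lagrange.interpolate_apply, eval_finsetSum]

variable {v : ι → ℝ}

lemma injOn_of_pairwise_le_abs_sub (hδ : 0 < δ)
    (hsep : (s : Set ι).Pairwise fun i j => δ ≤ |v i - v j|) : Set.InjOn v s := by
  intro i hi j hj hij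
  by_contra hne
  have : δ ≤ |v i - v j| := hsep hi hj hne
  rw [hij, sub_self, abs_zero] at this
  linarith

lemma abs_inv_mul_le_div {x a : ℝ} (hδ : 0 < δ) (hx : δ ≤ |x|) (ha : |a| ≤ R) :
    |x⁻¹ * a| ≤ R / δ := by
  rw [abs_mul, abs_inv, inv_mul_eq_div]
  exact div_le_div₀ ((abs_nonneg _).trans ha) ha hδ hx

lemma eval_basis_eq_prod (i : ι) (t : ℝ) :
    (Lagrange.basis s v i).eval t = ∏ j ∈ s.erase i, (v i - v j)⁻¹ * (t - v j) := by
  simp [Lagrange.basis, Lagrange.basisDivisor, eval_prod]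

variable (hδ : 0 < δ) (hsep : (s : Set ι).Pairwise fun i j => δ ≤ |v i - v j|)
include hδ hsep

lemma abs_eval_basis_le {i : ι} (hi : i ∈ s) {t : ℝ} (ht : ∀ j ∈ s, |t - v j| ≤ R) :
    |(Lagrange.basis s v i).eval t| ≤ (R / δ) ^ (#s - 1) := by
  rw [eval_basis_eq_prod, ← card_erase_of_mem hi]
  exact abs_prod_le_pow_card _ fun j hj =>
    abs_inv_mul_le_div hδ (hsep hi (mem_erase.1 hj).2 (mem_erase.1 hj).1.symm)
      (ht j (mem_erase.1 hj).2)

lemma abs_eval_basis_sub_eval_basis_le (hδR : δ ≤ R) {i : ι} (hi : i ∈ s) {z w : ℝ}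
    (hz : ∀ j ∈ s, |z - v j| ≤ R) (hw : ∀ j ∈ s, |w - v j| ≤ R) :
    |(Lagrange.basis s v i).eval z - (Lagrange.basis s v i).eval w|
      ≤ (#s - 1 : ℕ) * (|z - w| / δ) * (R / δ) ^ (#s - 1) := by
  rw [eval_basis_eq_prod, eval_basis_eq_prod, ← card_erase_of_mem hi]
  have hsep' : ∀ j ∈ s.erase i, δ ≤ |v i - v j| := fun j hj =>
    hsep hi (mem_erase.1 hj).2 (mem_erase.1 hj).1.symm
  refine abs_prod_sub_prod_le _ ((one_le_div₀ hδ).2 hδR)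
    (fun j hj => abs_inv_mul_le_div hδ (hsep' j hj) (hz j (mem_erase.1 hj).2))
    (fun j hj => abs_inv_mul_le_div hδ (hsep' j hj) (hw j (mem_erase.1 hj).2))
    fun j hj => ?_
  rw [← mul_sub, sub_sub_sub_cancel_right]
  exact abs_inv_mul_le_div hδ (hsep' j hj) le_rfl

variable {P : ℝ[X]} (hP : P.degree < #s) {M : ℝ} (hM : ∀ i ∈ s, |P.eval (v i)| ≤ M)
include hP hM

lemma abs_eval_le_of_pairwise {t : ℝ} (ht : ∀ j ∈ s, |t - v j| ≤ R) :
    |P.eval t| ≤ #s * (M * (R / δ) ^ (#s - 1)) := by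
  rw [eval_eq_sum_eval_mul_eval_basis (injOn_of_pairwise_le_abs_sub hδ hsep) hP]
  exact abs_sum_mul_le s hM fun i hi => abs_eval_basis_le hδ hsep hi ht

lemma abs_eval_sub_eval_le_of_pairwise (hδR : δ ≤ R) {z w : ℝ}
    (hz : ∀ j ∈ s, |z - v j| ≤ R) (hw : ∀ j ∈ s, |w - v j| ≤ R) :
    |P.eval z - P.eval w|
      ≤ #s * (M * ((#s - 1 : ℕ) * (|z - w| / δ) * (R / δ) ^ (#s - 1))) := by
  have hvs := injOn_of_pairwise_le_abs_sub hδ hsep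
  rw [eval_eq_sum_eval_mul_eval_basis hvs hP z, eval_eq_sum_eval_mul_eval_basis hvs hP w,
    ← sum_sub_distrib]
  simp_rw [← mul_sub]
  exact abs_sum_mul_le s hM fun i hi => abs_eval_basis_sub_eval_basis_le hδ hsep hδR hi hz hw

end Lagrange

/-- Chosen so that `c = nodeRadius n δ` satisfies `c (n + 1) (3/δ)^n ≤ 1/2` and
`(n + 1) n (c/δ) (3/δ)^n ≤ 1/2`, the two Lagrange estimates of `exists_abs_eval_ge_near_node`. -/
noncomputable def nodeRadius (n : ℕ) (δ : ℝ) : ℝ := δ ^ (n + 1) / (2 * (n + 1) ^ 2 * 3 ^ n)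

lemma nodeRadius_pos {n : ℕ} {δ : ℝ} (hδ : 0 < δ) : 0 < nodeRadius n δ := by
  unfold nodeRadius
  positivity

lemma nodeRadius_le_half {n : ℕ} {δ : ℝ} (hδ : 0 < δ) (hδ1 : δ ≤ 1) :
    nodeRadius n δ ≤ 1 / 2 := by
  unfold nodeRadius
  rw [div_le_iff₀ (by positivity)]
  have hden : (1 : ℝ) ≤ (n + 1) ^ 2 * 3 ^ n :=
    one_le_mul_of_one_le_of_one_le (one_le_pow₀ (by linarith [n.cast_nonneg (α := ℝ)]))
      (one_le_pow₀ (by norm_num))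
  linarith [pow_le_one₀ (n := n + 1) hδ.le hδ1]

lemma degree_lt_card_univ_fin {F : Type*} [Field F] {n : ℕ} {P : F[X]}
    (hP : P.natDegree ≤ n) : P.degree < #(univ : Finset (Fin (n + 1))) := by
  rw [card_univ, Fintype.card_fin]
  exact (degree_le_of_natDegree_le hP).trans_lt (by exact_mod_cast Nat.lt_succ_self n)

section Nodes

variable {n : ℕ} {δ : ℝ} (hδ : 0 < δ) (hδ1 : δ ≤ 1) {v : Fin (n + 1) → ℝ}
  (hv : ∀ i, |v i| ≤ 1) (hsep : Pairwise fun i j => δ ≤ |v i - v j|) {P : ℝ[X]}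
  (hP : P.natDegree ≤ n) {B : ℝ} (hB : ∀ i, |P.eval (v i)| ≤ B)
include hδ hv hsep hP hB

lemma iSup_abs_eval_Icc_le_of_nodes :
    ⨆ t : Set.Icc (-1 : ℝ) 1, |P.eval (t : ℝ)| ≤ (n + 1) * (B * (3 / δ) ^ n) := by
  have hB0 : 0 ≤ B := (abs_nonneg _).trans (hB 0)
  refine Real.iSup_le (fun t => ?_) (by positivity)
  have ht : |(t : ℝ)| ≤ 1 := abs_le.2 t.2
  simpa using abs_eval_le_of_pairwise (s := univ) (R := 3) hδ
    (fun _ _ _ _ hij => hsep hij) (degree_lt_card_univ_fin hP) (fun i _ => hB i)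
    (fun j _ => (abs_sub _ _).trans (by linarith [hv j]))

include hδ1 in
lemma abs_eval_sub_eval_node_le (i : Fin (n + 1)) {z : ℝ} (hz : |z - v i| ≤ 1) :
    |P.eval z - P.eval (v i)| ≤ (n + 1) * (B * (n * (|z - v i| / δ) * (3 / δ) ^ n)) := by
  have hnode : ∀ j, |v i - v j| ≤ 2 := fun j =>
    (abs_sub _ _).trans (by linarith [hv i, hv j])
  simpa using abs_eval_sub_eval_le_of_pairwise (s := univ) (R := 3) hδ
    (fun _ _ _ _ hij => hsep hij) (degree_lt_card_univ_fin hP) (fun i _ => hB i) (by linarith)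
    (fun j _ => (abs_sub_le z (v i) (v j)).trans (by linarith [hnode j]))
    (fun j _ => (hnode j).trans (by norm_num))

end Nodes

lemma exists_abs_eval_ge_near_node {n : ℕ} {δ : ℝ} (hδ : 0 < δ) (hδ1 : δ ≤ 1)
    {v : Fin (n + 1) → ℝ} (hv : ∀ i, |v i| ≤ 1) (hsep : Pairwise fun i j => δ ≤ |v i - v j|)
    {P : ℝ[X]} (hP : P.natDegree ≤ n) :
    ∃ i, ∀ z ∈ Set.Icc (v i - nodeRadius n δ) (v i + nodeRadius n δ),
      nodeRadius n δ * ⨆ t : Set.Icc (-1 : ℝ) 1, |P.eval (t : ℝ)| ≤ |P.eval z| := by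
  set c := nodeRadius n δ with hc
  obtain ⟨I, hI⟩ := Finite.exists_max fun i => |P.eval (v i)|
  set B := |P.eval (v I)|
  have hB0 : 0 ≤ B := abs_nonneg _
  refine ⟨I, fun z hz => ?_⟩
  have hzI : |z - v I| ≤ c := abs_sub_le_iff.2 ⟨by linarith [hz.2], by linarith [hz.1]⟩
  have hupper : c * ⨆ t : Set.Icc (-1 : ℝ) 1, |P.eval (t : ℝ)| ≤ B / 2 := by
    have hcoef : c * ((n + 1) * (3 / δ) ^ n) = δ / (2 * (n + 1)) := by
      rw [hc, nodeRadius, div_pow, pow_succ]; field_simp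
    have : δ / (2 * (n + 1)) ≤ 1 / 2 := by
      rw [div_le_iff₀ (by positivity)]; nlinarith [n.cast_nonneg (α := ℝ)]
    calc _ ≤ c * ((n + 1) * (B * (3 / δ) ^ n)) :=
          mul_le_mul_of_nonneg_left (iSup_abs_eval_Icc_le_of_nodes hδ hv hsep hP hI)
            (nodeRadius_pos hδ).le
      _ = c * ((n + 1) * (3 / δ) ^ n) * B := by ring
      _ ≤ 1 / 2 * B := by rw [hcoef]; gcongr
      _ = B / 2 := by ring
  have hclose : |P.eval z - P.eval (v I)| ≤ B / 2 := by
    have hcoef : (n + 1) * (n * (c / δ) * (3 / δ) ^ n) = n / (2 * (n + 1)) := by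
      rw [hc, nodeRadius, div_pow, pow_succ]; field_simp
    have : (n : ℝ) / (2 * (n + 1)) ≤ 1 / 2 := by
      rw [div_le_iff₀ (by positivity)]; linarith
    calc _ ≤ (n + 1) * (B * (n * (|z - v I| / δ) * (3 / δ) ^ n)) :=
          abs_eval_sub_eval_node_le hδ hδ1 hv hsep hP hI I
            (hzI.trans ((nodeRadius_le_half hδ hδ1).trans (by norm_num)))
      _ ≤ (n + 1) * (B * (n * (c / δ) * (3 / δ) ^ n)) := by gcongr
      _ = (n + 1) * (n * (c / δ) * (3 / δ) ^ n) * B := by ring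
      _ ≤ 1 / 2 * B := by rw [hcoef]; gcongr
      _ = B / 2 := by ring
  have := abs_sub_abs_le_abs_sub (P.eval (v I)) (P.eval z)
  rw [abs_sub_comm] at this
  linarith


theorem stmt_7_general (d : ℕ) (κ : ℝ) (hκ : κ ∈ Set.Ioo (0 : ℝ) 1) :
    ∃ κ' ∈ Set.Ioo (0 : ℝ) 1,
      ∀ ρ : ℝ, ρ ∈ Set.Ioc (0 : ℝ) 1 → κ < ρ / 100 →
        ∀ K : Set ℝ, K ⊆ Set.Ioo (-ρ) ρ → (0 : ℝ) ∈ K →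
          (∀ σ ∈ Set.Ioo (0 : ℝ) 1, ∀ x ∈ K, ∃ y ∈ K, κ * σ ≤ |x - y| ∧ |x - y| ≤ σ) →
          ∀ P : Polynomial ℝ, P.natDegree ≤ d →
            ∃ z₀ ∈ K ∩ Set.Ioo (-(ρ / 2)) (ρ / 2),
              ∀ z ∈ Set.Icc (z₀ - κ') (z₀ + κ'),
                κ' * (⨆ t : Set.Icc (-1 : ℝ) 1, |P.eval (t : ℝ)|) ≤ |P.eval z| := by
  obtain ⟨hκ0, hκ1⟩ := hκ
  set δ := κ / 2 * κ * (κ / 4) ^ d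
  have hδ : 0 < δ := by positivity
  have hδ1 : δ ≤ 1 :=
    mul_le_one₀ (by nlinarith) (by positivity) (pow_le_one₀ (by positivity) (by linarith))
  refine ⟨nodeRadius d δ,
    ⟨nodeRadius_pos hδ, (nodeRadius_le_half hδ hδ1).trans_lt (by norm_num)⟩,
    fun ρ hρ hκρ K hKρ h0K hK P hP => ?_⟩
  obtain ⟨v, hvK, hv0, hsep⟩ :=
    IsUniformlyPerfect.exists_fin_separated hK hκ0 (by linarith) ⟨hκ0, hκ1⟩ h0K d
  have hv : ∀ i, |v i| ≤ 1 := fun i =>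
    abs_le.2 ⟨by linarith [(hKρ (hvK i)).1, hρ.2], by linarith [(hKρ (hvK i)).2, hρ.2]⟩
  obtain ⟨i, hi⟩ := exists_abs_eval_ge_near_node hδ hδ1 hv hsep hP
  refine ⟨v i, ⟨hvK i, ?_⟩, hi⟩
  have := abs_le.1 (sub_zero (v i) ▸ hv0 i)
  constructor <;> linarith [this.1, this.2]

/-- Polynomials are large on a definite interval near a uniformly perfect set: for every
`d ≥ 1` and `κ ∈ (0,1)` there exists `κ̃ ∈ (0,1)` such that for every `ρ ∈ (0,1]` with
`κ < ρ/100` and every `κ`-uniformly perfect set `K ⊆ (-ρ,ρ)` containing `0`, every real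
polynomial `P` of degree at most `d` is bounded below by `κ̃ ‖P‖_{∞,[-1,1]}` on a whole
interval `[z₀ - κ̃, z₀ + κ̃]` with `z₀ ∈ K ∩ (-ρ/2, ρ/2)`. -/
theorem stmt_7 (d : ℕ) (hd : 1 ≤ d) (κ : ℝ) (hκ : κ ∈ Set.Ioo (0 : ℝ) 1) :
    ∃ κ' ∈ Set.Ioo (0 : ℝ) 1,
      ∀ ρ : ℝ, ρ ∈ Set.Ioc (0 : ℝ) 1 → κ < ρ / 100 →
        ∀ K : Set ℝ, K ⊆ Set.Ioo (-ρ) ρ → (0 : ℝ) ∈ K →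
          (∀ σ ∈ Set.Ioo (0 : ℝ) 1, ∀ x ∈ K, ∃ y ∈ K, κ * σ ≤ |x - y| ∧ |x - y| ≤ σ) →
          ∀ P : Polynomial ℝ, P.natDegree ≤ d →
            ∃ z₀ ∈ K ∩ Set.Ioo (-(ρ / 2)) (ρ / 2),
              ∀ z ∈ Set.Icc (z₀ - κ') (z₀ + κ'),
                κ' * (⨆ t : Set.Icc (-1 : ℝ) 1, |P.eval (t : ℝ)|) ≤ |P.eval z| :=
  stmt_7_general d κ hκ
end
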